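/- On M^0 one has the identity Γ = 2r·ϖ1 − ϖ2, where Γ is the (1,0)-form F − G, ϖ1 is the smooth (1,0)-form ϕ − ψ_U|_{M^0} on M^0 (the difference of the canonical-connection section and the Narasimhan–Seshadri section of C^0), and ϖ2 is the smooth (1,0)-form τ − ψ_Q|_{M^0} (the difference of the tautological-trivialization section and the Quillen section of Conn(Θ)^0). -/
import Mathlib


/-!
Abstract setting for the results of Biswas–Hurtubise, "A canonical connection on bundles on
Riemann surfaces and Quillen connection on the theta bundle".

Throughout, `X` is a fixed compact connected Riemann surface of genus `g ≥ 2`, `K_X` is its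
canonical (holomorphic cotangent) line bundle, and `K_X^{1/2}` is a fixed theta characteristic
(with a fixed isomorphism `K_X^{1/2} ⊗ K_X^{1/2} ≅ K_X`).  All the geometric objects attached
to `(X, K_X^{1/2}, r)` that appear in the paper are packaged as the data of the structure
`BHSetup` below; the fields are explained in their doc-strings.
-/

/-- Abstract setup encoding: the moduli space `M` of stable bundles of rank `r` and degree `0`
on `X`, the theta divisor `D_Θ` and theta bundle `Θ = O_M(D_Θ)`, the moduli space `C` of pairs
(stable bundle, holomorphic connection) as a `T^*M`-torsor over `M`, the bundle `Conn(Θ)` of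
holomorphic connections on `Θ` as a `T^*M`-torsor over `M`, the Narasimhan–Seshadri and Quillen
`C^∞` sections `ψ_U`, `ψ_Q`, the holomorphic sections `ϕ` (canonical connection) and `τ`
(tautological trivialization) over `M^0 = M \ D_Θ`, the holomorphic symplectic forms `Φ1`, `Φ2`,
and the space `H^0(M, (T^*M) ⊗ Θ)` together with the Jacobian `J(X)` data. -/
structure BHSetup where
  /-- the rank `r` of the stable vector bundles -/
  r : ℕ
  /-- `r` is a positive integer -/
  r_pos : 0 < r
  /-- the points of the moduli space `M` of stable holomorphic vector bundles on `X` of rank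
      `r` and degree `0` -/
  M : Type
  /-- the theta divisor `D_Θ = {E ∈ M ∣ H^0(X, E ⊗ K_X^{1/2}) ≠ 0}`; its complement is the
      Zariski open subset `M^0 = M \ D_Θ` -/
  Dθ : Set M
  /-- the fiber `T^*_E M = H^0(X, End E ⊗ K_X)` of the holomorphic cotangent bundle of `M` -/
  Cot : M → Type
  [cotGroup : ∀ E, AddCommGroup (Cot E)]
  /-- the fiber over `E` of the moduli space `C` of holomorphic connections: the set of
      holomorphic connections `D` on the stable bundle `E` -/
  CFib : M → Type
  /-- the torsor action of `T^*_E M` on the fiber of `C` over `E`: `(v, D) ↦ D + v` -/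
  vaddC : ∀ E, Cot E → CFib E → CFib E
  vaddC_zero : ∀ E a, vaddC E 0 a = a
  vaddC_add : ∀ E v w a, vaddC E (v + w) a = vaddC E v (vaddC E w a)
  /-- the difference of two holomorphic connections on `E`, an element of `T^*_E M` -/
  vsubC : ∀ E, CFib E → CFib E → Cot E
  vsubC_vadd : ∀ E a b, vaddC E (vsubC E b a) a = b
  vaddC_injective : ∀ E a, Function.Injective fun v => vaddC E v a
  /-- the fiber over `E` of the holomorphic fiber bundle `Conn(Θ) → M` given by the sheaf of
      holomorphic connections on the theta line bundle `Θ = O_M(D_Θ)` -/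
  ConnFib : M → Type
  /-- the torsor action of `T^*_E M` on the fiber of `Conn(Θ)` over `E` -/
  vaddT : ∀ E, Cot E → ConnFib E → ConnFib E
  vaddT_zero : ∀ E a, vaddT E 0 a = a
  vaddT_add : ∀ E v w a, vaddT E (v + w) a = vaddT E v (vaddT E w a)
  /-- the difference of two points of the fiber of `Conn(Θ)`, an element of `T^*_E M` -/
  vsubT : ∀ E, ConnFib E → ConnFib E → Cot E
  vsubT_vadd : ∀ E a b, vaddT E (vsubT E b a) a = b
  vaddT_injective : ∀ E a, Function.Injective fun v => vaddT E v a
  /-- the `C^∞` Narasimhan–Seshadri section `ψ_U : M → C`, sending a stable bundle `E` to its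
      unique holomorphic connection with unitary monodromy -/
  ψU : ∀ E, CFib E
  /-- the `C^∞` Quillen section `ψ_Q : M → Conn(Θ)`, given by the unique Hermitian connection
      on `Θ` whose curvature is the Kähler form `ω_M` -/
  ψQ : ∀ E, ConnFib E
  /-- the holomorphic section `ϕ` of `C` over `M^0 = M \ D_Θ`, sending `E` to the canonical
      holomorphic connection `β̂'_E` constructed from the unique section `β_E` of
      `(p1^*(E⊗K_X^{1/2})) ⊗ (p2^*(E^*⊗K_X^{1/2})) ⊗ O_{X×X}(Δ)` restricting to `Id_E` on the
      diagonal -/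
  φ : ∀ E, E ∉ Dθ → CFib E
  /-- the holomorphic section `τ` of `Conn(Θ)` over `M^0`, given by the trivial holomorphic
      connection (de Rham differential) via the tautological trivialization of
      `Θ = O_M(D_Θ)` off `D_Θ` -/
  τ : ∀ E, E ∉ Dθ → ConnFib E
  /-- `IsHolomorphicMap F` : the fiber-preserving map `C → Conn(Θ)` determined by the family
      `F` of fiber maps is holomorphic -/
  IsHolomorphicMap : (∀ E, CFib E → ConnFib E) → Prop
  /-- `IsHolomorphicMapOn G` : the fiber-preserving map `C^0 → Conn(Θ)^0` over
      `M^0 = M \ D_Θ` determined by `G` is holomorphic -/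
  IsHolomorphicMapOn : (∀ E, E ∉ Dθ → (CFib E → ConnFib E)) → Prop
  /-- the space of holomorphic 2-forms on the complex manifold `C` -/
  FormC : Type
  [formCGroup : AddCommGroup FormC]
  /-- the space of holomorphic 2-forms on the complex manifold `Conn(Θ)` -/
  FormT : Type
  /-- the natural (Goldman / Atiyah–Bott) holomorphic symplectic form `Φ1` on `C` -/
  Φ1 : FormC
  /-- the holomorphic symplectic form `Φ2` on `Conn(Θ)`, the curvature of the tautological
      connection on `q^*Θ` -/
  Φ2 : FormT
  /-- pullback of holomorphic 2-forms on `Conn(Θ)` along a fiber-preserving map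
      `C → Conn(Θ)` -/
  pull2 : (∀ E, CFib E → ConnFib E) → FormT → FormC
  /-- `IsLagrangianSec s ω` : the image of the section `s : M^0 → C^0` is a complex Lagrangian
      submanifold of `C^0` with respect to the restriction to `C^0` of the 2-form `ω` -/
  IsLagrangianSec : (∀ E, E ∉ Dθ → CFib E) → FormC → Prop
  /-- the space `H^0(M, (T^*M) ⊗ Θ) = H^0(M, (T^*M) ⊗ O_M(D_Θ))` of meromorphic 1-forms on
      `M` with pole of order at most one along `D_Θ` -/
  SecTMΘ : Type
  /-- the restriction to `M^0` of a meromorphic 1-form in `H^0(M, (T^*M) ⊗ Θ)`, as a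
      holomorphic 1-form on `M^0` -/
  restrictSec : SecTMΘ → ∀ E, E ∉ Dθ → Cot E
  /-- the space `H^0(J(X), T^*J(X))` of holomorphic 1-forms on the Jacobian
      `J(X) = Pic^0(X)` -/
  OneFormJ : Type
  /-- `ω ↦ (Ψ^*ω) ⊗ s_Θ` : pullback of a 1-form on `J(X)` along the determinant map
      `Ψ : M → J(X)`, `E ↦ ∧^r E`, tensored with the canonical section of `Θ`; a map
      `H^0(J(X), T^*J(X)) → H^0(M, (T^*M) ⊗ Θ)` -/
  pullΨ : OneFormJ → SecTMΘ
  /-- pullback of holomorphic 1-forms on `J(X)` by the involution `ι_J : L ↦ L^*` -/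
  ιJStar : OneFormJ → OneFormJ
  /-- `IsLogConnΘ s` : the holomorphic connection on `Θ|_{M^0}` corresponding to the section
      `s` of `Conn(Θ)^0 → M^0` extends to a logarithmic connection on `Θ` over all of `M`
      with polar divisor `D_Θ` -/
  IsLogConnΘ : (∀ E, E ∉ Dθ → ConnFib E) → Prop
  /-- `ConnSecMeroPoleLe n s` : the section `s` of `Conn(Θ)` over `M^0` is meromorphic along
      `D_Θ` with a pole of order at most `n` (defined via local holomorphic trivializations
      of the torsor `Conn(Θ)`, independently of the choices) -/
  ConnSecMeroPoleLe : ℕ → (∀ E, E ∉ Dθ → ConnFib E) → Prop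

attribute [instance] BHSetup.cotGroup BHSetup.formCGroup

namespace BHSetup

variable (S : BHSetup)

/-- The conditions of Theorem 1 of Biswas–Hurtubise on a fiber-preserving map
`F : C → Conn(Θ)` (fiber preservation, i.e. `pr = q ∘ F`, is built into the type of `F`):
`F` is a holomorphic isomorphism, `F ∘ ψ_U = ψ_Q`, and `F` intertwines the `T^*M`-torsor
structures up to the multiplicative factor `2r`, i.e. `F (D + v) = F D + 2r • v`. -/
def IsFIso (F : ∀ E, S.CFib E → S.ConnFib E) : Prop :=
  S.IsHolomorphicMap F ∧ (∀ E, Function.Bijective (F E)) ∧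
    (∀ E, F E (S.ψU E) = S.ψQ E) ∧
    ∀ E v a, F E (S.vaddC E v a) = S.vaddT E ((2 * S.r) • v) (F E a)

/-- The conditions of Lemma 1 of Biswas–Hurtubise on a fiber-preserving map
`G : C^0 → Conn(Θ)^0` over `M^0 = M \ D_Θ` (fiber preservation, i.e. `pr̂ = q̂ ∘ G`, is built
into the type of `G`): `G` is a holomorphic isomorphism, `G ∘ ϕ = τ`, and `G` intertwines the
`T^*M^0`-torsor structures up to the multiplicative factor `2r`. -/
def IsGIso (G : ∀ E, E ∉ S.Dθ → (S.CFib E → S.ConnFib E)) : Prop :=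
  S.IsHolomorphicMapOn G ∧ (∀ E hE, Function.Bijective (G E hE)) ∧
    (∀ E hE, G E hE (S.φ E hE) = S.τ E hE) ∧
    ∀ E hE v a, G E hE (S.vaddC E v a) = S.vaddT E ((2 * S.r) • v) (G E hE a)

end BHSetup

/-- identity (fi) in the proof of Proposition 1 of the paper.  On `M^0`
one has `Γ = 2r • ϖ1 − ϖ2`, where `Γ` is the `(1,0)`-form `F − G`, `ϖ1 = ϕ − ψ_U|_{M^0}`
is the difference of the canonical-connection section and the Narasimhan–Seshadri section
of `C^0`, and `ϖ2 = τ − ψ_Q|_{M^0}` is the difference of the tautological-trivialization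
section and the Quillen section of `Conn(Θ)^0`. -/
theorem BH_Gamma_eq (S : BHSetup)
    (F : ∀ E, S.CFib E → S.ConnFib E) (hF : S.IsFIso F)
    (G : ∀ E, E ∉ S.Dθ → (S.CFib E → S.ConnFib E)) (hG : S.IsGIso G) :
    ∀ (E : S.M) (hE : E ∉ S.Dθ) (α : S.CFib E),
      S.vsubT E (F E α) (G E hE α) =
        (2 * S.r) • S.vsubC E (S.φ E hE) (S.ψU E) -
          S.vsubT E (S.τ E hE) (S.ψQ E) := by
  obtain ⟨-, -, hFψ, hFadd⟩ := hF
  obtain ⟨-, -, hGφ, hGadd⟩ := hG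
  intro E hE α
  set v := S.vsubC E α (S.ψU E) with hv
  set ϖ1 := S.vsubC E (S.φ E hE) (S.ψU E) with hϖ1
  set ϖ2 := S.vsubT E (S.τ E hE) (S.ψQ E) with hϖ2
  have hα : α = S.vaddC E v (S.ψU E) := (S.vsubC_vadd E (S.ψU E) α).symm
  have hφ : S.φ E hE = S.vaddC E ϖ1 (S.ψU E) := (S.vsubC_vadd E (S.ψU E) _).symm
  have hτ : S.τ E hE = S.vaddT E ϖ2 (S.ψQ E) := (S.vsubT_vadd E (S.ψQ E) _).symm
  -- express ψU in terms of φ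
  have hψ : S.ψU E = S.vaddC E (-ϖ1) (S.φ E hE) := by
    rw [hφ, ← S.vaddC_add, neg_add_cancel, S.vaddC_zero]
  have hF' : F E α = S.vaddT E ((2 * S.r) • v) (S.ψQ E) := by
    rw [hα, hFadd, hFψ]
  have hG' : G E hE α =
      S.vaddT E ((2 * S.r) • (v + -ϖ1) + ϖ2) (S.ψQ E) := by
    rw [hα, hψ, ← S.vaddC_add, hGadd, hGφ, hτ, ← S.vaddT_add]
  apply S.vaddT_injective E (G E hE α)
  show S.vaddT E _ _ = S.vaddT E _ _
  rw [S.vsubT_vadd, hF', hG', ← S.vaddT_add]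
  congr 1
  rw [smul_add, smul_neg]
  abel
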